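/- Let (X, 𝓔) be an infinite finitary coarse space. Then every permutation of X is an asymorphism of (X, 𝓔) if and only if there exists an infinite cardinal κ ≤ |X|⁺ such that (X, 𝓔) = X_G for G = S_X^{<κ}. -/

import Mathlib

open Set

/-- Composition of two relations (as subsets of `X × X`). -/
def relComp {X : Type*} (s t : Set (X × X)) : Set (X × X) :=
  {p | ∃ z, (p.1, z) ∈ s ∧ (z, p.2) ∈ t}

/-- Inverse of a relation. -/
def relInv {X : Type*} (s : Set (X × X)) : Set (X × X) := {p | (p.2, p.1) ∈ s}

/-- A coarse structure on `X`: a family of reflexive relations closed under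
composition, inversion and reflexive subrelations, whose union is `X × X`. -/
structure IsCoarse {X : Type*} (𝓔 : Set (Set (X × X))) : Prop where
  refl : ∀ s ∈ 𝓔, ∀ x : X, (x, x) ∈ s
  comp : ∀ s ∈ 𝓔, ∀ t ∈ 𝓔, relComp s t ∈ 𝓔
  inv : ∀ s ∈ 𝓔, relInv s ∈ 𝓔
  subrel : ∀ s ∈ 𝓔, ∀ t, (∀ x : X, (x, x) ∈ t) → t ⊆ s → t ∈ 𝓔
  cover : ∀ p : X × X, ∃ s ∈ 𝓔, p ∈ s

/-- The ball of radius `s` around `x`. -/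
def ball {X : Type*} (s : Set (X × X)) (x : X) : Set X := {y | (x, y) ∈ s}

/-- A set is bounded if it is contained in some ball. -/
def IsBoundedIn {X : Type*} (𝓔 : Set (Set (X × X))) (B : Set X) : Prop :=
  ∃ s ∈ 𝓔, ∃ x : X, B ⊆ ball s x

/-- A bornology: closed under subsets and finite unions, contains all finite sets. -/
def IsBornology {X : Type*} (𝓑 : Set (Set X)) : Prop :=
  (∀ A ∈ 𝓑, ∀ B ⊆ A, B ∈ 𝓑) ∧ (∀ A ∈ 𝓑, ∀ B ∈ 𝓑, A ∪ B ∈ 𝓑) ∧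
    (∀ A : Set X, A.Finite → A ∈ 𝓑)

/-- The entourage `E_B = Δ_X ∪ (B × B)` of the discrete coarse space. -/
def EB {X : Type*} (B : Set X) : Set (X × X) :=
  {p | p.1 = p.2 ∨ (p.1 ∈ B ∧ p.2 ∈ B)}

/-- The discrete coarse structure defined by a bornology `𝓑`. -/
def discreteCoarse {X : Type*} (𝓑 : Set (Set X)) : Set (Set (X × X)) :=
  {s | (∀ x : X, (x, x) ∈ s) ∧ ∃ B ∈ 𝓑, s ⊆ EB B}

/-- `𝓔'` is a base for `𝓔`. -/
def IsBase {X : Type*} (𝓔' 𝓔 : Set (Set (X × X))) : Prop :=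
  𝓔' ⊆ 𝓔 ∧ ∀ s ∈ 𝓔, ∃ t ∈ 𝓔', s ⊆ t

/-- Discrete coarse space: outside some bounded set all balls are singletons. -/
def IsDiscreteCoarse {X : Type*} (𝓔 : Set (Set (X × X))) : Prop :=
  ∀ s ∈ 𝓔, ∃ B : Set X, IsBoundedIn 𝓔 B ∧ ∀ x ∉ B, ball s x = {x}

/-- A self-map is bornologous if it sends bounded sets to bounded sets. -/
def Bornologous {X : Type*} (𝓔 : Set (Set (X × X))) (f : X → X) : Prop :=
  ∀ B : Set X, IsBoundedIn 𝓔 B → IsBoundedIn 𝓔 (f '' B)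

/-- A self-map is macro-uniform. -/
def MacroUniform {X : Type*} (𝓔 : Set (Set (X × X))) (f : X → X) : Prop :=
  ∀ s ∈ 𝓔, ∃ t ∈ 𝓔, ∀ x y : X, (x, y) ∈ s → (f x, f y) ∈ t

/-- The entourage determined by a finite set `F` of permutations. -/
def EF {X : Type*} (F : Finset (Equiv.Perm X)) : Set (X × X) :=
  {p | ∃ g ∈ F, p.2 = g p.1}

/-- The coarse structure on `X` generated by a set `G` of permutations of `X`
(with base the entourages `EF F`, `F ⊆ G` finite containing the identity). -/
def permCoarse {X : Type*} (G : Set (Equiv.Perm X)) : Set (Set (X × X)) :=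
  {s | (∀ x : X, (x, x) ∈ s) ∧
    ∃ F : Finset (Equiv.Perm X), ↑F ⊆ G ∧ (1 : Equiv.Perm X) ∈ F ∧ s ⊆ EF F}

/-- The support of a permutation. -/
def psupp {X : Type*} (g : Equiv.Perm X) : Set X := {x | g x ≠ x}

/-- Permutations of support of cardinality less than `κ`. -/
def SuppLT (X : Type*) (κ : Cardinal) : Set (Equiv.Perm X) :=
  {g | Cardinal.mk (psupp g) < κ}

/-- A permutation compatible with the coarse structure `𝓔`. -/
def Compatible {X : Type*} (𝓔 : Set (Set (X × X))) (g : Equiv.Perm X) : Prop :=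
  ∃ s ∈ 𝓔, ∀ x : X, (x, g x) ∈ s

/-- A finitary coarse space: uniformly bounded finite balls. -/
def Finitary {X : Type*} (𝓔 : Set (Set (X × X))) : Prop :=
  ∀ s ∈ 𝓔, ∃ n : ℕ, ∀ x : X, (ball s x).Finite ∧ (ball s x).ncard < n

/-- A locally finite coarse space: all balls finite. -/
def LocallyFinite' {X : Type*} (𝓔 : Set (Set (X × X))) : Prop :=
  ∀ s ∈ 𝓔, ∀ x : X, (ball s x).Finite

/-- A crowded subset: some entourage has nontrivial balls at all its points. -/
def Crowded {X : Type*} (𝓔 : Set (Set (X × X))) (Y : Set X) : Prop :=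
  ∃ s ∈ 𝓔, ∀ y ∈ Y, 1 < (ball s y).ncard

/-- An asymorphism: a permutation which is macro-uniform in both directions. -/
def IsAsymorphism {X : Type*} (𝓔 : Set (Set (X × X))) (h : Equiv.Perm X) : Prop :=
  MacroUniform 𝓔 h ∧ MacroUniform 𝓔 h.symm


/-!
The permutations compatible with `𝓔` (those moving all points within one entourage) form a
subgroup `N` that contains every finitary permutation and contains any permutation agreeing at
each point with one of finitely many members of `N`. Edge-colouring a finitary entourage covers it
by the graphs of finitely many involutions, so `𝓔 = X_N`. If every permutation is an asymorphism,
`N` is normal, and we show `N = S_X^{<κ}` with `κ` least above all support sizes in `N`. If `h ∈ N`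
has at least `ν ≥ ℵ₀` moved points, the commutator of `h` with a suitable involution is an
involution in `N` with `ν` moved and `|X|` fixed points; all such involutions are conjugate. A
permutation `g` with at most `ν` moved points agrees piecewise with finitely many of them: colour
its support with three colours so that `g` moves each colour class off itself, and halve the
classes so that enough points stay fixed.
-/

open Cardinal

theorem SimpleGraph.colorable_of_encard_neighborSet_lt {V : Type*} (G : SimpleGraph V) {n : ℕ}
    (h : ∀ v, (G.neighborSet v).encard < n) : G.Colorable n := by
  classical
  have hwf : WellFounded (WellOrderingRel (α := V)) := WellOrderingRel.isWellOrder.wf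
  have free : ∀ v (c : ∀ w, WellOrderingRel w v → Fin n),
      ∃ k, ∀ w (hw : WellOrderingRel w v), G.Adj v w → c w hw ≠ k := by
    intro v c
    by_contra! hall
    choose w hw hadj hwk using hall
    have hinj : Function.Injective w := fun k l hkl => by
      have hc : ∀ a b (ha : WellOrderingRel a v) (hb : WellOrderingRel b v), a = b →
          c a ha = c b hb := by
        rintro a _ ha hb rfl; rfl
      rw [← hwk k, ← hwk l]
      exact hc _ _ _ _ hkl
    have : (n : ℕ∞) < n := calc
      (n : ℕ∞) = ENat.card (Fin n) := by simp
      _ ≤ (Set.range w).encard := hinj.encard_range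
      _ ≤ (G.neighborSet v).encard := Set.encard_le_encard (Set.range_subset_iff.2 hadj)
      _ < n := h v
    exact this.false
  let c : V → Fin n := hwf.fix fun v c => (free v c).choose
  have hc : ∀ v, c v = (free v fun w _ => c w).choose := hwf.fix_eq _
  have valid : ∀ v w, G.Adj v w → WellOrderingRel w v → c v ≠ c w := fun v w hvw hwv => by
    rw [hc v]
    exact ((free v fun w _ => c w).choose_spec w hwv hvw).symm
  refine ⟨.mk c fun {v w} hvw => ?_⟩
  rcases trichotomous_of WellOrderingRel v w with hr | rfl | hr
  · exact (valid w v hvw.symm hr).symm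
  · exact (G.loopless.irrefl v hvw).elim
  · exact valid v w hvw hr

section Perm

variable {X : Type*}

theorem exists_perm_of_symm_of_unique (R : X → X → Prop) (hsymm : ∀ x y, R x y → R y x)
    (huniq : ∀ x y z, R x y → R x z → y = z) :
    ∃ σ : Equiv.Perm X, (∀ x y, R x y → σ x = y) ∧ ∀ x, σ x = x ∨ R x (σ x) := by
  classical
  let f : X → X := fun x => if h : ∃ y, R x y then h.choose else x
  have hf : ∀ x y, R x y → f x = y := fun x y hxy => by
    have h : ∃ y, R x y := ⟨y, hxy⟩
    simp only [f, dif_pos h]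
    exact huniq _ _ _ h.choose_spec hxy
  have hfix : ∀ x, (¬ ∃ y, R x y) → f x = x := fun x h => dif_neg h
  have hinv : Function.Involutive f := by
    intro x
    by_cases h : ∃ y, R x y
    · obtain ⟨y, hy⟩ := h
      rw [hf x y hy, hf y x (hsymm x y hy)]
    · rw [hfix x h, hfix x h]
  refine ⟨hinv.toPerm, hf, fun x => ?_⟩
  by_cases h : ∃ y, R x y
  · obtain ⟨y, hy⟩ := h
    exact Or.inr (by simpa [hf x y hy] using hy)
  · exact Or.inl (hfix x h)

theorem psupp_conj (u g : Equiv.Perm X) : psupp (u * g * u⁻¹) = u '' psupp g := by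
  ext x
  rw [Equiv.image_eq_preimage_symm]
  simp [psupp, Equiv.Perm.inv_def, Equiv.eq_symm_apply]

theorem Equiv.Perm.Disjoint.psupp_mul {f g : Equiv.Perm X} (hfg : f.Disjoint g) :
    psupp (f * g) = psupp f ∪ psupp g := by
  ext x
  simp only [psupp, Set.mem_ofPred_eq, Set.mem_union, ne_eq, hfg.mul_apply_eq_iff]
  tauto

theorem Equiv.Perm.disjoint_of_disjoint_psupp {f g : Equiv.Perm X}
    (h : _root_.Disjoint (psupp f) (psupp g)) : f.Disjoint g := fun x => by
  by_contra! hx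
  exact Set.disjoint_left.1 h hx.1 hx.2

theorem Function.Involutive.mul_of_commute {f g : Equiv.Perm X} (hf : Function.Involutive f)
    (hg : Function.Involutive g) (hfg : Commute f g) : Function.Involutive (f * g) := fun x => by
  have hc : f (g x) = g (f x) := congrArg (· x) hfg.eq
  simp only [Equiv.Perm.mul_apply]
  rw [hc, hg, hf]

open Classical in
noncomputable def swapAlong {B B' : Set X} (e : B ≃ B') (hBB' : Disjoint B B') :
    Equiv.Perm X :=
  Function.Involutive.toPerm
    (fun x => if hx : x ∈ B then e ⟨x, hx⟩ else if hx' : x ∈ B' then e.symm ⟨x, hx'⟩ else x)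
    (by
      intro x
      by_cases hx : x ∈ B
      · simp [hx, Set.disjoint_right.1 hBB' (e ⟨x, hx⟩).2]
      · by_cases hx' : x ∈ B'
        · simp [hx, hx', (e.symm ⟨x, hx'⟩).2]
        · simp [hx, hx'])

section swapAlong

variable {B B' : Set X} (e : B ≃ B') (hBB' : Disjoint B B')

open Classical in
theorem swapAlong_apply (x : X) : swapAlong e hBB' x =
    if hx : x ∈ B then (e ⟨x, hx⟩ : X) else if hx' : x ∈ B' then (e.symm ⟨x, hx'⟩ : X) else x :=
  rfl

theorem swapAlong_apply_of_mem {x : X} (hx : x ∈ B) : swapAlong e hBB' x = e ⟨x, hx⟩ := by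
  simp [swapAlong_apply, hx]

theorem swapAlong_involutive : Function.Involutive (swapAlong e hBB') :=
  Function.Involutive.toPerm_involutive _

theorem psupp_swapAlong : psupp (swapAlong e hBB') = B ∪ B' := by
  ext x
  by_cases hx : x ∈ B
  · simp only [psupp, Set.mem_ofPred_eq, swapAlong_apply_of_mem e hBB' hx, Set.mem_union, hx,
      true_or, iff_true]
    exact fun h => Set.disjoint_left.1 hBB' hx (h ▸ (e ⟨x, hx⟩).2)
  · by_cases hx' : x ∈ B'
    · simp only [psupp, Set.mem_ofPred_eq, swapAlong_apply, hx, hx', dif_neg, dif_pos,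
        Set.mem_union, or_true, iff_true, not_false_eq_true]
      exact fun h => hx (h ▸ (e.symm ⟨x, hx'⟩).2)
    · simp [psupp, swapAlong_apply, hx, hx']

end swapAlong

/-- A greedy colouring of the graph `x — g x`, whose degrees are at most `2`. -/
theorem exists_three_sets_disjoint_image (g : Equiv.Perm X) :
    ∃ A : Fin 3 → Set X, ⋃ i, A i = psupp g ∧ ∀ i, Disjoint (A i) (g '' A i) := by
  let G := SimpleGraph.fromRel fun x y => y = g x
  have hdeg : ∀ x, (G.neighborSet x).encard < 3 := by
    intro x
    have hsub : G.neighborSet x ⊆ {g x, g⁻¹ x} := by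
      rintro y ⟨-, rfl | rfl⟩
      · exact Or.inl rfl
      · exact Or.inr (by simp)
    calc (G.neighborSet x).encard ≤ ({g x, g⁻¹ x} : Set X).encard := Set.encard_le_encard hsub
      _ ≤ ({g⁻¹ x} : Set X).encard + 1 := Set.encard_insert_le _ _
      _ < 3 := by rw [Set.encard_singleton]; decide
  obtain ⟨c⟩ := G.colorable_of_encard_neighborSet_lt hdeg
  refine ⟨fun i => {x | g x ≠ x ∧ c x = i}, by ext; simp [psupp], fun i => ?_⟩
  refine Set.disjoint_left.2 fun x hx ⟨y, hy, hyx⟩ => ?_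
  exact c.valid ⟨hy.1.symm, Or.inl rfl⟩ (hy.2.trans (hyx ▸ hx.2).symm)

theorem exists_subset_mk_eq_mk_diff {A : Set X} (hA : ℵ₀ ≤ #A) :
    ∃ B ⊆ A, #B = #A ∧ #↥(A \ B) = #A := by
  obtain ⟨e⟩ : Nonempty (A ⊕ A ≃ A) := Cardinal.eq.1 (by simpa using add_eq_self hA)
  have he : Function.Injective fun y => (e y : X) := Subtype.val_injective.comp e.injective
  let i : A → X := fun a => e (.inl a)
  let j : A → X := fun a => e (.inr a)
  refine ⟨Set.range i, Set.range_subset_iff.2 fun a => (e _).2,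
    mk_range_eq i (he.comp Sum.inl_injective), le_antisymm (mk_le_mk_of_subset sdiff_subset) ?_⟩
  calc #A = #(Set.range j) := (mk_range_eq j (he.comp Sum.inr_injective)).symm
    _ ≤ #↥(A \ Set.range i) := mk_le_mk_of_subset <| Set.range_subset_iff.2 fun a =>
      ⟨(e _).2, fun ⟨b, hb⟩ => Sum.inl_ne_inr (he hb)⟩

theorem mk_compl_eq_of_le {s : Set X} (hinf : ℵ₀ ≤ #↥sᶜ) (hle : #s ≤ #↥sᶜ) : #↥sᶜ = #X := by
  rw [← mk_sum_compl s, add_eq_right hinf hle]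

theorem exists_le_mk_of_le_mk_iUnion {A : Fin 3 → Set X} {μ : Cardinal} (hμ : ℵ₀ ≤ μ)
    (h : μ ≤ #↥(⋃ i, A i)) : ∃ i, μ ≤ #(A i) := by
  by_contra! hA
  have hsub : ⋃ i, A i ⊆ A 0 ∪ A 1 ∪ A 2 := Set.iUnion_subset fun i x hx => by
    match i with
    | 0 => exact Or.inl (Or.inl hx)
    | 1 => exact Or.inl (Or.inr hx)
    | 2 => exact Or.inr hx
  refine (add_lt_of_lt hμ (add_lt_of_lt hμ (hA 0) (hA 1)) (hA 2)).not_ge ?_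
  calc μ ≤ #↥(A 0 ∪ A 1 ∪ A 2) := h.trans (mk_le_mk_of_subset hsub)
    _ ≤ #↥(A 0 ∪ A 1) + #(A 2) := mk_union_le _ _
    _ ≤ #(A 0) + #(A 1) + #(A 2) := add_le_add_left (mk_union_le _ _) _

/-- `T` contains one point of each `2`-cycle of `p`. -/
theorem Function.Involutive.exists_equiv_sum {p : Equiv.Perm X} (hp : Function.Involutive p) :
    ∃ (T : Set X) (e : (T ⊕ T) ⊕ ↥(psupp p)ᶜ ≃ X), #(psupp p) = #T + #T ∧
      ∀ y, p (e y) = e (Equiv.sumCongr (Equiv.sumComm T T) (Equiv.refl _) y) := by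
  let _ := IsWellOrder.linearOrder (WellOrderingRel (α := X))
  have hT : ∀ {x}, p x < x → p x < p (p x) := fun h => by rwa [hp]
  have hF : ∀ {x}, ¬ x < p x → ¬ p x < x → x ∈ (psupp p)ᶜ := fun h h' =>
    not_not.2 (le_antisymm (not_lt.1 h) (not_lt.1 h'))
  let T : Set X := {x | x < p x}
  let e : (T ⊕ T) ⊕ ↥(psupp p)ᶜ ≃ X :=
    { toFun := Sum.elim (Sum.elim (↑) (p ∘ (↑))) (↑)
      invFun := fun x => if h : x < p x then .inl (.inl ⟨x, h⟩)
        else if h' : p x < x then .inl (.inr ⟨p x, hT h'⟩) else .inr ⟨x, hF h h'⟩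
      left_inv := by
        rintro ((⟨a, ha : a < p a⟩ | ⟨a, ha : a < p a⟩) | ⟨b, hb⟩)
        · simp [ha]
        · simp [hp a, ha, ha.not_gt]
        · have hb' : p b = b := not_not.1 hb
          simp [hb']
      right_inv := fun x => by
        dsimp only
        split_ifs <;> simp [hp x] }
  refine ⟨T, e, ?_, ?_⟩
  · have hsupp : psupp p = T ∪ p '' T := by
      ext x
      refine ⟨fun hx => ?_, ?_⟩
      · rcases lt_or_gt_of_ne (Ne.symm hx) with hx | hx
        · exact Or.inl hx
        · exact Or.inr ⟨p x, hT hx, hp x⟩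
      · rintro (hx | ⟨a, ha : a < p a, rfl⟩)
        · exact hx.ne'
        · exact fun h => ha.ne' (by rw [hp] at h; exact h.symm)
    have hdisj : Disjoint T (p '' T) := by
      refine Set.disjoint_left.2 fun x (hx : x < p x) => ?_
      rintro ⟨a, ha : a < p a, rfl⟩
      rw [hp] at hx
      exact lt_asymm ha hx
    rw [hsupp, mk_union_of_disjoint hdisj, mk_image_eq p.injective]
  · rintro ((a | a) | b)
    · rfl
    · exact hp _
    · exact not_not.1 b.2

theorem isConj_of_involutive {p q : Equiv.Perm X} (hp : Function.Involutive p)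
    (hq : Function.Involutive q) (hinf : ℵ₀ ≤ #(psupp p)) (hsupp : #(psupp p) = #(psupp q))
    (hfix : #↥(psupp p)ᶜ = #↥(psupp q)ᶜ) : IsConj p q := by
  obtain ⟨T, e, hT, he⟩ := hp.exists_equiv_sum
  obtain ⟨T', e', hT', he'⟩ := hq.exists_equiv_sum
  have hTT' : #T = #T' := by
    have h2 : ∀ c : Cardinal, ℵ₀ ≤ c + c → c + c = c := fun c hc =>
      add_eq_self (not_lt.1 fun h => (add_lt_aleph0 h h).not_ge hc)
    calc #T = #T + #T := (h2 _ (hT ▸ hinf)).symm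
      _ = #T' + #T' := by rw [← hT, ← hT', hsupp]
      _ = #T' := h2 _ (hT' ▸ hsupp ▸ hinf)
  obtain ⟨σ⟩ := Cardinal.eq.1 hTT'
  obtain ⟨ρ⟩ := Cardinal.eq.1 hfix
  let u : Equiv.Perm X := e.symm.trans ((Equiv.sumCongr (Equiv.sumCongr σ σ) ρ).trans e')
  refine isConj_iff.2 ⟨u, Equiv.ext fun x => ?_⟩
  obtain ⟨y, rfl⟩ := (e.trans u).surjective x
  have hu : ∀ z, u (e z) = e' (Equiv.sumCongr (Equiv.sumCongr σ σ) ρ z) := fun z => by simp [u]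
  change u (p (u⁻¹ (u (e y)))) = q (u (e y))
  rw [Equiv.Perm.inv_def, Equiv.symm_apply_apply, he, hu, hu, he']
  rcases y with (a | a) | b <;> rfl

end Perm

namespace Subgroup.Normal

variable {X : Type*} {N : Subgroup (Equiv.Perm X)} {h₀ : Equiv.Perm X}

/-- If `f` is an involution supported in a set `M` disjoint from `h₀ M`, then the commutator
`[f, h₀] = f · h₀ f h₀⁻¹` is an involution supported on `M ∪ h₀ M`. -/
theorem exists_involutive_mem (hN : N.Normal) (hh₀ : h₀ ∈ N) {μ : Cardinal} (hμ : ℵ₀ ≤ μ)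
    (hμh₀ : μ ≤ #(psupp h₀)) :
    ∃ j ∈ N, Function.Involutive j ∧ #(psupp j) = μ ∧ #↥(psupp j)ᶜ = #X := by
  obtain ⟨A, hAsupp, hA⟩ := exists_three_sets_disjoint_image h₀
  obtain ⟨i, hi⟩ := exists_le_mk_of_le_mk_iUnion hμ (hAsupp ▸ hμh₀)
  obtain ⟨C, hCA, hC, hAC⟩ := exists_subset_mk_eq_mk_diff (hμ.trans hi)
  obtain ⟨M, hMC, hM⟩ := le_mk_iff_exists_subset.1 (hC ▸ hi)
  obtain ⟨M₁, hM₁M, hM₁, hMM₁⟩ := exists_subset_mk_eq_mk_diff (hM ▸ hμ)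
  obtain ⟨e⟩ := Cardinal.eq.1 (hM₁.trans hMM₁.symm)
  let f := swapAlong e Set.disjoint_sdiff_right
  have hf : Function.Involutive f := swapAlong_involutive _ _
  have hfM : psupp f = M := by rw [psupp_swapAlong, Set.union_sdiff_cancel hM₁M]
  have hf' : f⁻¹ = f := inv_eq_of_mul_eq_one_right (Equiv.ext hf)
  have hMh₀M : Disjoint M (h₀ '' M) :=
    (hA i).mono (hMC.trans hCA) (Set.image_mono (hMC.trans hCA))
  have hdisj : f.Disjoint (h₀ * f * h₀⁻¹) :=
    Equiv.Perm.disjoint_of_disjoint_psupp (by rwa [psupp_conj, hfM])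
  have hj : psupp (f * (h₀ * f * h₀⁻¹)) = M ∪ h₀ '' M := by
    rw [hdisj.psupp_mul, psupp_conj, hfM]
  have hjμ : #↥(M ∪ h₀ '' M) = μ := by
    rw [mk_union_of_disjoint hMh₀M, mk_image_eq h₀.injective, hM, add_eq_self hμ]
  refine ⟨f * (h₀ * f * h₀⁻¹), ?_, ?_, hj ▸ hjμ, ?_⟩
  · have := N.mul_mem (hN.conj_mem _ hh₀ f) (N.inv_mem hh₀)
    rwa [hf', mul_assoc, mul_assoc, ← mul_assoc h₀] at this
  · refine hf.mul_of_commute ?_ hdisj.commute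
    intro x
    simp [hf _]
  · have hroom : A i \ C ⊆ (M ∪ h₀ '' M)ᶜ := by
      rintro x ⟨hxA, hxC⟩ (hxM | hxM)
      · exact hxC (hMC hxM)
      · exact Set.disjoint_left.1 (hA i) hxA (Set.image_mono (hMC.trans hCA) hxM)
    have hμroom : μ ≤ #↥(M ∪ h₀ '' M)ᶜ := (hAC ▸ hi).trans (mk_le_mk_of_subset hroom)
    rw [hj]
    exact mk_compl_eq_of_le (hμ.trans hμroom) (hjμ ▸ hμroom)

theorem mem_of_involutive (hN : N.Normal) (hh₀ : h₀ ∈ N) {p : Equiv.Perm X}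
    (hp : Function.Involutive p) (hinf : ℵ₀ ≤ #(psupp p)) (hle : #(psupp p) ≤ #(psupp h₀))
    (hfix : #↥(psupp p)ᶜ = #X) : p ∈ N := by
  obtain ⟨j, hjN, hj, hjp, hjfix⟩ := hN.exists_involutive_mem hh₀ hinf hle
  obtain ⟨u, rfl⟩ := isConj_iff.1 <|
    isConj_of_involutive hj hp (hjp ▸ hinf) hjp (hjfix.trans hfix.symm)
  exact hN.conj_mem j hjN u

theorem swapAlong_image_mem (hN : N.Normal) (hh₀ : h₀ ∈ N) {g : Equiv.Perm X} {A B : Set X}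
    (hA : Disjoint A (g '' A)) (hBA : B ⊆ A) (hB : #B = #A) (hAB : #↥(A \ B) = #A)
    (hinf : ℵ₀ ≤ #A) (hle : #A ≤ #(psupp h₀)) :
    swapAlong (Equiv.Set.image g B g.injective) (hA.mono hBA (Set.image_mono hBA)) ∈ N := by
  have hsupp : #↥(B ∪ g '' B) = #A := by
    rw [mk_union_of_disjoint (hA.mono hBA (Set.image_mono hBA)), mk_image_eq g.injective, hB,
      add_eq_self hinf]
  have hroom : A \ B ⊆ (B ∪ g '' B)ᶜ := by
    rintro x ⟨hxA, hxB⟩ (hx | hx)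
    · exact hxB hx
    · exact Set.disjoint_left.1 hA hxA (Set.image_mono hBA hx)
  have hAroom : #A ≤ #↥(B ∪ g '' B)ᶜ := hAB ▸ mk_le_mk_of_subset hroom
  refine hN.mem_of_involutive hh₀ (swapAlong_involutive _ _) ?_ ?_ ?_ <;>
    rw [psupp_swapAlong]
  · exact hsupp ▸ hinf
  · exact hsupp ▸ hle
  · exact mk_compl_eq_of_le (hinf.trans hAroom) (hsupp ▸ hAroom)

theorem exists_finset_mem_agree (hN : N.Normal) (hh₀ : h₀ ∈ N)
    (hfin : ∀ g : Equiv.Perm X, (psupp g).Finite → g ∈ N) {g : Equiv.Perm X} {A : Set X}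
    (hA : Disjoint A (g '' A)) (hle : #A ≤ #(psupp h₀)) :
    ∃ F : Finset (Equiv.Perm X), ↑F ⊆ (N : Set (Equiv.Perm X)) ∧
      ∀ x ∈ A, ∃ σ ∈ F, g x = σ x := by
  let σ (B : Set X) (hBA : B ⊆ A) : Equiv.Perm X :=
    swapAlong (Equiv.Set.image g B g.injective) (hA.mono hBA (Set.image_mono hBA))
  have agree : ∀ {B} (hBA : B ⊆ A) {x} (hx : x ∈ B), g x = σ B hBA x :=
    fun _ _ hx => by rw [swapAlong_apply_of_mem _ _ hx, Equiv.Set.image_apply]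
  rcases Set.finite_or_infinite A with hAfin | hAinf
  · refine ⟨{σ A le_rfl}, ?_, fun x hx => ⟨_, Finset.mem_singleton_self _, agree le_rfl hx⟩⟩
    rw [Finset.coe_singleton, Set.singleton_subset_iff, SetLike.mem_coe]
    exact hfin _ (by rw [psupp_swapAlong]; exact hAfin.union (hAfin.image g))
  · have hinf : ℵ₀ ≤ #A := Cardinal.infinite_iff.1 hAinf.to_subtype
    obtain ⟨B, hBA, hB, hAB⟩ := exists_subset_mk_eq_mk_diff hinf
    classical
    refine ⟨{σ B hBA, σ (A \ B) Set.sdiff_subset}, ?_, fun x hx => ?_⟩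
    · rw [Finset.coe_pair, Set.pair_subset_iff]
      refine ⟨hN.swapAlong_image_mem hh₀ hA hBA hB hAB hinf hle,
        hN.swapAlong_image_mem hh₀ hA Set.sdiff_subset hAB ?_ hinf hle⟩
      rwa [Set.sdiff_sdiff_cancel_left hBA]
    · by_cases hxB : x ∈ B
      · exact ⟨_, Finset.mem_insert_self _ _, agree hBA hxB⟩
      · exact ⟨_, Finset.mem_insert_of_mem (Finset.mem_singleton_self _),
          agree Set.sdiff_subset ⟨hx, hxB⟩⟩

theorem mem_of_mk_psupp_le (hN : N.Normal) (hh₀ : h₀ ∈ N)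
    (hfin : ∀ g : Equiv.Perm X, (psupp g).Finite → g ∈ N)
    (hloc : ∀ (g : Equiv.Perm X) (F : Finset (Equiv.Perm X)), ↑F ⊆ (N : Set (Equiv.Perm X)) →
      (∀ x, ∃ σ ∈ F, g x = σ x) → g ∈ N)
    {g : Equiv.Perm X} (hle : #(psupp g) ≤ #(psupp h₀)) : g ∈ N := by
  classical
  obtain ⟨A, hAsupp, hA⟩ := exists_three_sets_disjoint_image g
  choose F hFN hF using fun i => hN.exists_finset_mem_agree hh₀ hfin (hA i)
    ((mk_le_mk_of_subset (hAsupp ▸ Set.subset_iUnion A i)).trans hle)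
  refine hloc g (insert 1 (Finset.univ.biUnion F)) ?_ fun x => ?_
  · rw [Finset.coe_insert, Set.insert_subset_iff, Finset.coe_biUnion]
    exact ⟨N.one_mem, Set.iUnion₂_subset fun i _ => hFN i⟩
  · by_cases hx : g x = x
    · exact ⟨1, Finset.mem_insert_self _ _, hx⟩
    · obtain ⟨i, hi⟩ := Set.mem_iUnion.1 (hAsupp ▸ hx : x ∈ ⋃ i, A i)
      obtain ⟨σ, hσ, hσx⟩ := hF i x hi
      exact ⟨σ, Finset.mem_insert_of_mem (Finset.mem_biUnion.2 ⟨i, Finset.mem_univ _, hσ⟩), hσx⟩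

theorem exists_eq_suppLT [Infinite X] (hN : N.Normal)
    (hfin : ∀ g : Equiv.Perm X, (psupp g).Finite → g ∈ N)
    (hloc : ∀ (g : Equiv.Perm X) (F : Finset (Equiv.Perm X)), ↑F ⊆ (N : Set (Equiv.Perm X)) →
      (∀ x, ∃ σ ∈ F, g x = σ x) → g ∈ N) :
    ∃ κ, ℵ₀ ≤ κ ∧ κ ≤ Order.succ #X ∧ (N : Set (Equiv.Perm X)) = SuppLT X κ := by
  let S := {κ : Cardinal | ℵ₀ ≤ κ ∧ ∀ g ∈ N, #(psupp g) < κ}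
  have hS : Order.succ #X ∈ S :=
    ⟨(aleph0_le_mk X).trans (Order.le_succ _), fun g _ => Order.lt_succ_iff.2 (mk_set_le _)⟩
  have hκ : sInf S ∈ S := csInf_mem ⟨_, hS⟩
  refine ⟨sInf S, hκ.1, csInf_le' hS, Set.ext fun g => ⟨hκ.2 g, fun hg => ?_⟩⟩
  rcases lt_or_ge #(psupp g) ℵ₀ with hg' | hinf
  · exact hfin g (lt_aleph0_iff_set_finite.1 hg')
  · have : #(psupp g) ∉ S := fun h => (csInf_le' h).not_gt hg
    obtain ⟨h₀, hh₀, hle⟩ : ∃ h₀ ∈ N, #(psupp g) ≤ #(psupp h₀) := by simpa [S, hinf] using this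
    exact hN.mem_of_mk_psupp_le hh₀ hfin hloc hle

end Subgroup.Normal

/-- Colour `X` properly for the relation `s ∘ s`; then, for each pair of colours, the `s`-edges
between these two colours form a matching, hence the graph of an involution inside `s`. -/
theorem exists_perms_cover {X : Type*} {s : Set (X × X)} (hrefl : ∀ x, (x, x) ∈ s)
    (hsymm : ∀ x y, (x, y) ∈ s → (y, x) ∈ s) {n : ℕ}
    (hn : ∀ x, (ball (relComp s s) x).Finite ∧ (ball (relComp s s) x).ncard < n) :
    ∃ σ : Sym2 (Fin n) → Equiv.Perm X,
      (∀ i x, (x, σ i x) ∈ s) ∧ ∀ x y, (x, y) ∈ s → ∃ i, σ i x = y := by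
  let G := SimpleGraph.fromRel fun x y => (x, y) ∈ relComp s s
  have hdeg : ∀ x, (G.neighborSet x).encard < n := by
    intro x
    have hsub : G.neighborSet x ⊆ ball (relComp s s) x := by
      rintro y ⟨-, hxy | ⟨z, hyz, hzx⟩⟩
      · exact hxy
      · exact ⟨z, hsymm _ _ hzx, hsymm _ _ hyz⟩
    calc (G.neighborSet x).encard ≤ (ball (relComp s s) x).encard := Set.encard_le_encard hsub
      _ = (ball (relComp s s) x).ncard := (hn x).1.cast_ncard_eq.symm
      _ < n := Nat.cast_lt.2 (hn x).2
  obtain ⟨c⟩ := G.colorable_of_encard_neighborSet_lt hdeg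
  have hc : ∀ x y z, (x, y) ∈ s → (x, z) ∈ s → c y = c z → y = z := fun x y z hy hz hyz => by
    by_contra hne
    exact c.valid ⟨hne, Or.inl ⟨x, hsymm _ _ hy, hz⟩⟩ hyz
  choose σ hσ hσs using fun e : Sym2 (Fin n) =>
    exists_perm_of_symm_of_unique (fun x y => (x, y) ∈ s ∧ s(c x, c y) = e)
      (fun x y hxy => ⟨hsymm _ _ hxy.1, Sym2.eq_swap.trans hxy.2⟩)
      (fun x y z hy hz => hc x y z hy.1 hz.1 (Sym2.congr_right.1 (hy.2.trans hz.2.symm)))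
  refine ⟨σ, fun e x => ?_, fun x y hxy => ⟨s(c x, c y), hσ _ x y ⟨hxy, rfl⟩⟩⟩
  rcases hσs e x with hx | hx
  · rw [hx]; exact hrefl x
  · exact hx.1

namespace IsCoarse

variable {X : Type*} {𝓔 : Set (Set (X × X))}

theorem union_mem (h : IsCoarse 𝓔) {s t : Set (X × X)} (hs : s ∈ 𝓔) (ht : t ∈ 𝓔) :
    s ∪ t ∈ 𝓔 := by
  refine h.subrel _ (h.comp s hs t ht) _ (fun x => Or.inl (h.refl s hs x)) ?_
  rintro ⟨a, b⟩ (hab | hab)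
  · exact ⟨b, hab, h.refl t ht b⟩
  · exact ⟨a, h.refl s hs a, hab⟩

theorem exists_superset_EF (h : IsCoarse 𝓔) {F : Finset (Equiv.Perm X)} (hF : F.Nonempty)
    (hc : ∀ f ∈ F, Compatible 𝓔 f) : ∃ t ∈ 𝓔, EF F ⊆ t := by
  induction hF using Finset.Nonempty.cons_induction with
  | singleton f =>
    obtain ⟨t, ht, hft⟩ := hc f (Finset.mem_singleton_self f)
    refine ⟨t, ht, ?_⟩
    rintro ⟨x, y⟩ ⟨g, hg, hy : y = g x⟩
    rw [hy, Finset.mem_singleton.1 hg]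
    exact hft x
  | cons f F hf hF ih =>
    obtain ⟨t, ht, hft⟩ := hc f (Finset.mem_cons_self f F)
    obtain ⟨t', ht', hFt'⟩ := ih fun g hg => hc g (Finset.mem_cons_of_mem hg)
    refine ⟨t ∪ t', h.union_mem ht ht', ?_⟩
    rintro ⟨x, y⟩ ⟨g, hg, hy : y = g x⟩
    subst hy
    rcases Finset.mem_cons.1 hg with rfl | hg
    · exact Or.inl (hft x)
    · exact Or.inr (hFt' ⟨g, hg, rfl⟩)

theorem compatible_swap [DecidableEq X] (h : IsCoarse 𝓔) (x y : X) :
    Compatible 𝓔 (Equiv.swap x y) := by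
  obtain ⟨s, hs, hxy⟩ := h.cover (x, y)
  refine ⟨s ∪ relInv s, h.union_mem hs (h.inv s hs), fun z => ?_⟩
  rw [Equiv.swap_apply_def]
  split_ifs with hzx hzy
  · subst hzx; exact Or.inl hxy
  · subst hzy; exact Or.inr hxy
  · exact Or.inl (h.refl s hs z)

def compatibleSubgroup [Nonempty X] (h : IsCoarse 𝓔) : Subgroup (Equiv.Perm X) where
  carrier := {g | Compatible 𝓔 g}
  one_mem' := by
    obtain ⟨x⟩ := ‹Nonempty X›
    obtain ⟨s, hs, -⟩ := h.cover (x, x)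
    exact ⟨s, hs, h.refl s hs⟩
  mul_mem' := by
    rintro f g ⟨s, hs, hfs⟩ ⟨t, ht, hgt⟩
    exact ⟨relComp t s, h.comp t ht s hs, fun x => ⟨g x, hgt x, hfs (g x)⟩⟩
  inv_mem' := by
    rintro f ⟨s, hs, hfs⟩
    refine ⟨relInv s, h.inv s hs, fun x => ?_⟩
    simpa [relInv] using hfs (f⁻¹ x)

variable [Nonempty X] (h : IsCoarse 𝓔)

theorem compatibleSubgroup_normal (hmu : ∀ u : Equiv.Perm X, MacroUniform 𝓔 u) :
    h.compatibleSubgroup.Normal where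
  conj_mem g := by
    rintro ⟨s, hs, hgs⟩ u
    obtain ⟨t, ht, hst⟩ := hmu u s hs
    exact ⟨t, ht, fun x => by simpa using hst _ _ (hgs (u⁻¹ x))⟩

theorem mem_compatibleSubgroup_of_finite {g : Equiv.Perm X} (hg : (psupp g).Finite) :
    g ∈ h.compatibleSubgroup := by
  classical
  refine (Subgroup.closure_le _).2 ?_ (mem_closure_isSwap'.2 hg)
  rintro _ ⟨x, y, -, rfl⟩
  exact h.compatible_swap x y

theorem mem_compatibleSubgroup_of_cover {g : Equiv.Perm X} {F : Finset (Equiv.Perm X)}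
    (hF : ↑F ⊆ (h.compatibleSubgroup : Set (Equiv.Perm X))) (hg : ∀ x, ∃ σ ∈ F, g x = σ x) :
    g ∈ h.compatibleSubgroup := by
  obtain ⟨x⟩ := ‹Nonempty X›
  obtain ⟨σ, hσ, -⟩ := hg x
  obtain ⟨t, ht, hFt⟩ := h.exists_superset_EF ⟨σ, hσ⟩ hF
  exact ⟨t, ht, fun x => hFt (hg x)⟩

theorem permCoarse_compatibleSubgroup (hfin : Finitary 𝓔) :
    permCoarse (h.compatibleSubgroup : Set (Equiv.Perm X)) = 𝓔 := by
  classical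
  ext s
  constructor
  · rintro ⟨hrefl, F, hF, hF1, hsF⟩
    obtain ⟨t, ht, hFt⟩ := h.exists_superset_EF ⟨1, hF1⟩ hF
    exact h.subrel t ht s hrefl (hsF.trans hFt)
  · intro hs
    let s' := s ∪ relInv s
    have hs' : s' ∈ 𝓔 := h.union_mem hs (h.inv s hs)
    obtain ⟨n, hn⟩ := hfin _ (h.comp s' hs' s' hs')
    obtain ⟨σ, hσs, hσ⟩ := exists_perms_cover (fun x => Or.inl (h.refl s hs x))
      (fun x y hxy => hxy.symm) hn
    refine ⟨h.refl s hs, insert 1 (Finset.univ.image σ), ?_, Finset.mem_insert_self _ _, ?_⟩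
    · rintro f hf
      rcases Finset.mem_insert.1 hf with rfl | hf
      · exact h.compatibleSubgroup.one_mem
      · obtain ⟨i, -, rfl⟩ := Finset.mem_image.1 hf
        exact ⟨s', hs', hσs i⟩
    · rintro ⟨x, y⟩ hxy
      obtain ⟨i, rfl⟩ := hσ x y (Or.inl hxy)
      exact ⟨σ i, Finset.mem_insert_of_mem (Finset.mem_image_of_mem _ (Finset.mem_univ i)), rfl⟩

end IsCoarse

theorem macroUniform_permCoarse {X : Type*} {G : Set (Equiv.Perm X)} {u : Equiv.Perm X}
    (hG : ∀ g ∈ G, u * g * u⁻¹ ∈ G) : MacroUniform (permCoarse G) u := by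
  classical
  rintro s ⟨-, F, hFG, hF1, hsF⟩
  have h1 : (1 : Equiv.Perm X) ∈ F.image fun g => u * g * u⁻¹ :=
    Finset.mem_image.2 ⟨1, hF1, by simp⟩
  refine ⟨EF (F.image fun g => u * g * u⁻¹), ⟨fun x => ⟨1, h1, rfl⟩, _, ?_, h1, subset_rfl⟩, ?_⟩
  · intro _ hf
    obtain ⟨g, hg, rfl⟩ := Finset.mem_image.1 hf
    exact hG g (hFG hg)
  · intro x y hxy
    obtain ⟨g, hg, hy : y = g x⟩ := hsF hxy
    exact ⟨u * g * u⁻¹, Finset.mem_image_of_mem _ hg, by simp [hy]⟩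

theorem conj_mem_suppLT {X : Type*} {κ : Cardinal} {g : Equiv.Perm X} (u : Equiv.Perm X)
    (hg : g ∈ SuppLT X κ) : u * g * u⁻¹ ∈ SuppLT X κ := by
  rwa [SuppLT, Set.mem_ofPred_eq, psupp_conj, mk_image_eq u.injective]

theorem asymorphism_characterization {X : Type*} [Infinite X]
    (𝓔 : Set (Set (X × X))) (h : IsCoarse 𝓔) (hfin : Finitary 𝓔) :
    (∀ f : Equiv.Perm X, IsAsymorphism 𝓔 f) ↔
      ∃ κ : Cardinal, Cardinal.aleph0 ≤ κ ∧
        κ ≤ Order.succ (Cardinal.mk X) ∧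
        𝓔 = permCoarse (SuppLT X κ) := by
  constructor
  · intro hAll
    obtain ⟨κ, hκ, hκX, hN⟩ := (h.compatibleSubgroup_normal fun u => (hAll u).1).exists_eq_suppLT
      (fun _ => h.mem_compatibleSubgroup_of_finite) (fun _ _ => h.mem_compatibleSubgroup_of_cover)
    exact ⟨κ, hκ, hκX, by rw [← hN, h.permCoarse_compatibleSubgroup hfin]⟩
  · rintro ⟨κ, -, -, rfl⟩ f
    exact ⟨macroUniform_permCoarse fun _ => conj_mem_suppLT f,
      macroUniform_permCoarse fun _ => conj_mem_suppLT f.symm⟩
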